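/- Suppose the 8-tuple (A₁₁, A₁₂, A₂₁, A₂₂, x̄₁, x̄₂, x₁*, x₂*) satisfies the system (S) and additionally A₂₁ > 0 and A₂₂ < 0. Then there exists x̃ ∈ (x₂*, x̄₂) such that φ₂″(x) < 0 for all x ∈ (x̄₁, x̃) and φ₂″(x) > 0 for all x ∈ (x̃, x̄₂). -/

import Mathlib

open Real Filter Set

/-- `φ₁(x) = A₁₁ e^{θx} + A₁₂ e^{−θx} + (x − s₁)/ρ`. -/
noncomputable def phi1 (ρ θ s1 A11 A12 : ℝ) : ℝ → ℝ :=
  fun x => A11 * Real.exp (θ * x) + A12 * Real.exp (-(θ * x)) + (x - s1) / ρ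

/-- `φ₂(x) = A₂₁ e^{θx} + A₂₂ e^{−θx} + (s₂ − x)/ρ`. -/
noncomputable def phi2 (ρ θ s2 A21 A22 : ℝ) : ℝ → ℝ :=
  fun x => A21 * Real.exp (θ * x) + A22 * Real.exp (-(θ * x)) + (s2 - x) / ρ

/-- The system (S): order conditions together with the ten equations, where
`θ = √(2ρ/σ²)`. -/
def SystemS (ρ σ lam lamt c ct s1 s2 A11 A12 A21 A22 xb1 xb2 xs1 xs2 : ℝ) : Prop :=
  xb1 < xs1 ∧ xs1 < xb2 ∧ xb1 < xs2 ∧ xs2 < xb2 ∧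
  deriv (phi1 ρ (Real.sqrt (2 * ρ / σ ^ 2)) s1 A11 A12) xs1 = lam ∧
  deriv (deriv (phi1 ρ (Real.sqrt (2 * ρ / σ ^ 2)) s1 A11 A12)) xs1 ≤ 0 ∧
  deriv (phi1 ρ (Real.sqrt (2 * ρ / σ ^ 2)) s1 A11 A12) xb1 = lam ∧
  phi1 ρ (Real.sqrt (2 * ρ / σ ^ 2)) s1 A11 A12 xb1
    = phi1 ρ (Real.sqrt (2 * ρ / σ ^ 2)) s1 A11 A12 xs1 - c - lam * (xs1 - xb1) ∧
  phi1 ρ (Real.sqrt (2 * ρ / σ ^ 2)) s1 A11 A12 xb2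
    = phi1 ρ (Real.sqrt (2 * ρ / σ ^ 2)) s1 A11 A12 xs2 + ct + lamt * (xb2 - xs2) ∧
  deriv (phi2 ρ (Real.sqrt (2 * ρ / σ ^ 2)) s2 A21 A22) xs2 = -lam ∧
  deriv (deriv (phi2 ρ (Real.sqrt (2 * ρ / σ ^ 2)) s2 A21 A22)) xs2 ≤ 0 ∧
  deriv (phi2 ρ (Real.sqrt (2 * ρ / σ ^ 2)) s2 A21 A22) xb2 = -lam ∧
  phi2 ρ (Real.sqrt (2 * ρ / σ ^ 2)) s2 A21 A22 xb1
    = phi2 ρ (Real.sqrt (2 * ρ / σ ^ 2)) s2 A21 A22 xs1 + ct + lamt * (xs1 - xb1) ∧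
  phi2 ρ (Real.sqrt (2 * ρ / σ ^ 2)) s2 A21 A22 xb2
    = phi2 ρ (Real.sqrt (2 * ρ / σ ^ 2)) s2 A21 A22 xs2 - c - lam * (xb2 - xs2)

/-
Since `φ₂″ = θ² (A₂₁ e^{θx} + A₂₂ e^{−θx})` with `A₂₁ > 0 > A₂₂`, the second derivative is strictly
increasing. The conditions `φ₂′(x₂*) = φ₂′(x̄₂) = −λ` and Rolle's theorem give a zero `x̃ ∈ (x₂*, x̄₂)`
of `φ₂″`, which is therefore negative to the left of `x̃` and positive to the right of it.
-/

theorem hasDerivAt_phi2 (ρ θ s2 A B x : ℝ) :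
    HasDerivAt (phi2 ρ θ s2 A B) (θ * (A * exp (θ * x) - B * exp (-(θ * x))) - 1 / ρ) x := by
  have hlin := (hasDerivAt_id' x).const_mul θ
  have hneg : HasDerivAt (fun y => -(θ * y)) (-θ) x := by
    simpa using (hasDerivAt_id' x).const_mul (-θ)
  have h := ((hlin.exp.const_mul A).add (hneg.exp.const_mul B)).add
    (((hasDerivAt_const x s2).sub (hasDerivAt_id' x)).div_const ρ)
  exact h.congr_deriv (by ring)

theorem deriv_phi2 (ρ θ s2 A B : ℝ) :
    deriv (phi2 ρ θ s2 A B) = fun x => θ * (A * exp (θ * x) - B * exp (-(θ * x))) - 1 / ρ :=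
  funext fun x => (hasDerivAt_phi2 ρ θ s2 A B x).deriv

theorem hasDerivAt_deriv_phi2 (ρ θ s2 A B x : ℝ) :
    HasDerivAt (deriv (phi2 ρ θ s2 A B)) (θ ^ 2 * (A * exp (θ * x) + B * exp (-(θ * x)))) x := by
  have hlin := (hasDerivAt_id' x).const_mul θ
  have hneg : HasDerivAt (fun y => -(θ * y)) (-θ) x := by
    simpa using (hasDerivAt_id' x).const_mul (-θ)
  rw [deriv_phi2]
  exact ((((hlin.exp.const_mul A).sub (hneg.exp.const_mul B)).const_mul θ).sub_const
    (1 / ρ)).congr_deriv (by ring)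

theorem differentiable_deriv_phi2 (ρ θ s2 A B : ℝ) : Differentiable ℝ (deriv (phi2 ρ θ s2 A B)) :=
  fun x => (hasDerivAt_deriv_phi2 ρ θ s2 A B x).differentiableAt

theorem strictMono_deriv_deriv_phi2 (ρ s2 : ℝ) {θ A B : ℝ} (hθ : 0 < θ) (hA : 0 < A)
    (hB : B < 0) : StrictMono (deriv (deriv (phi2 ρ θ s2 A B))) := by
  intro x y hxy
  have hθxy : θ * x < θ * y := mul_lt_mul_of_pos_left hxy hθ
  rw [(hasDerivAt_deriv_phi2 ρ θ s2 A B x).deriv, (hasDerivAt_deriv_phi2 ρ θ s2 A B y).deriv]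
  refine mul_lt_mul_of_pos_left (add_lt_add ?_ ?_) (by positivity)
  · exact mul_lt_mul_of_pos_left (exp_lt_exp.2 hθxy) hA
  · exact mul_lt_mul_of_neg_left (exp_lt_exp.2 (neg_lt_neg hθxy)) hB

theorem stmt_8_general (ρ σ lam lamt c ct s1 s2 : ℝ) (hρ : 0 < ρ) (hσ : 0 < σ)
    (A11 A12 A21 A22 xb1 xb2 xs1 xs2 : ℝ)
    (hS : SystemS ρ σ lam lamt c ct s1 s2 A11 A12 A21 A22 xb1 xb2 xs1 xs2)
    (hA21 : 0 < A21) (hA22 : A22 < 0) :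
    ∃ xt ∈ Set.Ioo xs2 xb2,
      (∀ x ∈ Set.Ioo xb1 xt,
        deriv (deriv (phi2 ρ (Real.sqrt (2 * ρ / σ ^ 2)) s2 A21 A22)) x < 0) ∧
      (∀ x ∈ Set.Ioo xt xb2,
        0 < deriv (deriv (phi2 ρ (Real.sqrt (2 * ρ / σ ^ 2)) s2 A21 A22)) x) := by
  obtain ⟨-, -, -, hxs2_lt, -, -, -, -, -, hslope_xs2, -, hslope_xb2, -, -⟩ := hS
  have hθ : 0 < √(2 * ρ / σ ^ 2) := sqrt_pos.2 (by positivity)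
  have hmono := strictMono_deriv_deriv_phi2 ρ s2 hθ hA21 hA22
  obtain ⟨xt, hxt, hzero⟩ := exists_deriv_eq_zero hxs2_lt
    (differentiable_deriv_phi2 _ _ _ _ _).continuous.continuousOn
    (hslope_xs2.trans hslope_xb2.symm)
  exact ⟨xt, hxt, fun x hx => hzero ▸ hmono hx.2, fun x hx => hzero ▸ hmono hx.1⟩

/-- If the 8-tuple solves (S) and `A₂₁ > 0 > A₂₂`, then `φ₂″` changes sign
exactly once in `(x̄₁, x̄₂)`, at some `x̃ ∈ (x₂*, x̄₂)`. -/
theorem stmt_8 (ρ σ lam lamt c ct s1 s2 : ℝ) (hρ : 0 < ρ) (hσ : 0 < σ)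
    (h1 : 0 < 1 - lam * ρ) (h2 : lamt ≤ lam) (h3 : 0 ≤ lamt)
    (h4 : ct ≤ c) (h5 : 0 ≤ ct) (h6 : 0 < c)
    (h7 : (c, lam) ≠ (ct, lamt)) (h8 : s1 < s2)
    (A11 A12 A21 A22 xb1 xb2 xs1 xs2 : ℝ)
    (hS : SystemS ρ σ lam lamt c ct s1 s2 A11 A12 A21 A22 xb1 xb2 xs1 xs2)
    (hA21 : 0 < A21) (hA22 : A22 < 0) :
    ∃ xt ∈ Set.Ioo xs2 xb2,
      (∀ x ∈ Set.Ioo xb1 xt,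
        deriv (deriv (phi2 ρ (Real.sqrt (2 * ρ / σ ^ 2)) s2 A21 A22)) x < 0) ∧
      (∀ x ∈ Set.Ioo xt xb2,
        0 < deriv (deriv (phi2 ρ (Real.sqrt (2 * ρ / σ ^ 2)) s2 A21 A22)) x) :=
  stmt_8_general ρ σ lam lamt c ct s1 s2 hρ hσ A11 A12 A21 A22 xb1 xb2 xs1 xs2 hS hA21 hA22
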